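/- For all positive integers n and m, H_n^{(m)} = ∑_{k=1}^n (1/k) · ∑_{j=1}^k (-1)^{j+1} · (1/j^{m-1}) · C(k,j). -/

import Mathlib

def recH : ℕ → ℕ → ℚ
  | 0, _ => 1
  | m+1, n => ∑ k ∈ Finset.Icc 1 n, (1/(k:ℚ)) * recH m k

/-!
Induct on `m`. Inserting the closed form for `recH m k` and exchanging the two sums (the inner
range `j ≤ k` may be widened to `j ≤ n` because `C(k, j) = 0` for `j > k`), everything reduces to
the identity `∑_{k=1}^n C(k, j) / k = C(n, j) / j`, which follows from `C(k, j) / k = C(k-1, j-1) / j`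
and Pascal's rule. The base case `m = 0` is the vanishing of the alternating sum of a row of
Pascal's triangle.
-/

open Finset

lemma sum_Icc_choose_div_self (n : ℕ) {j : ℕ} (hj : j ≠ 0) :
    ∑ k ∈ Icc 1 n, (k.choose j : ℚ) / k = n.choose j / j := by
  obtain ⟨i, rfl⟩ := Nat.exists_eq_succ_of_ne_zero hj
  induction n with
  | zero => simp
  | succ n ih =>
    have absorb : ((n + 1).choose (i + 1) : ℚ) / (n + 1) = n.choose i / (i + 1) := by
      rw [div_eq_div_iff (by positivity) (by positivity)]
      rw [mul_comm _ ((n : ℚ) + 1)]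
      exact_mod_cast (Nat.add_one_mul_choose_eq n i).symm
    rw [sum_Icc_succ_top (by omega), ih]
    push_cast
    rw [absorb, Nat.choose_succ_succ]
    push_cast
    ring

lemma sum_Icc_one_neg_one_pow_succ_mul_choose {k : ℕ} (hk : k ≠ 0) :
    ∑ j ∈ Icc 1 k, (-1 : ℚ) ^ (j + 1) * k.choose j = 1 := by
  have row : ∑ j ∈ range (k + 1), (-1 : ℚ) ^ j * k.choose j = 0 := by
    exact_mod_cast Int.alternating_sum_range_choose_of_ne hk
  rw [range_eq_Ico, sum_eq_sum_Ico_succ_bot (by omega), Ico_add_one_right_eq_Icc] at row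
  simp only [pow_succ, mul_neg_one, neg_mul, sum_neg_distrib]
  rw [neg_eq_iff_eq_neg]
  simpa [add_eq_zero_iff_eq_neg'] using row

lemma sum_Icc_mul_choose_of_le (f : ℕ → ℚ) {k n : ℕ} (hkn : k ≤ n) :
    ∑ j ∈ Icc 1 k, f j * k.choose j = ∑ j ∈ Icc 1 n, f j * k.choose j := by
  refine sum_subset (Icc_subset_Icc le_rfl hkn) fun j hj hjk => ?_
  rw [Nat.choose_eq_zero_of_lt (by simp_all), Nat.cast_zero, mul_zero]

lemma recH_eq_sum_choose (m : ℕ) {n : ℕ} (hn : 1 ≤ n) :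
    recH m n = ∑ j ∈ Icc 1 n, (-1:ℚ)^(j+1) * (1/(j:ℚ)^m) * (n.choose j) := by
  induction m generalizing n with
  | zero =>
    simpa [recH] using (sum_Icc_one_neg_one_pow_succ_mul_choose (by omega : n ≠ 0)).symm
  | succ m ih =>
    set c : ℕ → ℚ := fun j => (-1:ℚ)^(j+1) * (1/(j:ℚ)^m)
    calc recH (m + 1) n
        = ∑ k ∈ Icc 1 n, ∑ j ∈ Icc 1 n, c j * ((k.choose j : ℚ) / k) := by
          refine sum_congr rfl fun k hk => ?_
          obtain ⟨hk1, hkn⟩ := mem_Icc.mp hk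
          rw [ih hk1, sum_Icc_mul_choose_of_le c hkn, mul_sum]
          exact sum_congr rfl fun j _ => by ring
      _ = ∑ j ∈ Icc 1 n, c j * (n.choose j / j) := by
          rw [sum_comm]
          refine sum_congr rfl fun j hj => ?_
          rw [← mul_sum, sum_Icc_choose_div_self n (by simp at hj; omega)]
      _ = _ := sum_congr rfl fun j _ => by simp only [c]; ring

theorem stmt15_general (n m : ℕ) (hm : 1 ≤ m) :
    recH m n = ∑ k ∈ Finset.Icc 1 n, (1/(k:ℚ)) *
      ∑ j ∈ Finset.Icc 1 k, (-1:ℚ)^(j+1) * (1/(j:ℚ)^(m-1)) * (k.choose j) := by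
  obtain ⟨m, rfl⟩ := Nat.exists_eq_add_of_le' hm
  exact sum_congr rfl fun k hk => by rw [recH_eq_sum_choose m (mem_Icc.mp hk).1, Nat.add_sub_cancel]

theorem stmt15 (n m : ℕ) (hn : 0 < n) (hm : 1 ≤ m) :
    recH m n = ∑ k ∈ Finset.Icc 1 n, (1/(k:ℚ)) *
      ∑ j ∈ Finset.Icc 1 k, (-1:ℚ)^(j+1) * (1/(j:ℚ)^(m-1)) * (k.choose j) :=
  stmt15_general n m hm
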